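/- Let r ≥ 0 and s ≥ 2r + 2. Define g_j^s(i) = Q̃^j_{s-j-1}(i+1)·S̃^j_{s-j}(i+1)·∏_{q=j}^{s-j-1} T(i+q) and f_j^s(i) = Q̃^j_{s-j-1}(i+1)·S̃^{j-1}_{s-j+1}(i)·∏_{q=j-1}^{s-j-1} T(i+q). Then Σ_{j=0}^{r} g_j^s(i) + Σ_{j=1}^{r} f_j^s(i) = S̃^r_{s-r}(i)·S̃^r_{s-r}(i+1)·∏_{q=r}^{s-r-1} T(i+q), and Σ_{j=0}^{r} g_j^s(i) + Σ_{j=1}^{r+1} f_j^s(i) = S̃^r_{s-r}(i)·S̃^{r+1}_{s-r-1}(i+1)·∏_{q=r}^{s-r-2} T(i+q). -/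
import Mathlib


variable {R : Type*} [CommRing R]

/-- Discrete polynomials `T^r_s(i)` (case `h = n = 1`), with the convention
`T^0_s = 1` and `T^r_s = 0` for `s = 0`, `r ≥ 1`. -/
def Tp (T : ℤ → R) : ℕ → ℕ → ℤ → R
  | 0, _, _ => 1
  | _ + 1, 0, _ => 0
  | r + 1, s + 1, i => Tp T (r + 1) s (i + 1) + T i * Tp T r s (i + 2)

/-- Discrete polynomials `S^r_s(i)` (case `h = n = 1`). -/
def Sp (T : ℤ → R) : ℕ → ℕ → ℤ → R
  | 0, _, _ => 1
  | _ + 1, 0, _ => 0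
  | r + 1, 1, i => ∏ q ∈ Finset.range (r + 1), T (i + q)
  | r + 1, s + 2, i => Sp T (r + 1) (s + 1) (i + 1) + T (i + r) * Sp T r (s + 2) i
  termination_by r s _ => r + s

/-- Discrete polynomials `Q^r_s(i) = S^r_s(i) - T(i+r-2)·T(i+s)·S^{r-2}_{s+2}(i)`
(for `r ≥ 2`), with `Q^0_s = 1` and `Q^1_s = S^1_s`. -/
def Qp (T : ℤ → R) : ℕ → ℕ → ℤ → R
  | 0, _, _ => 1
  | 1, s, i => Sp T 1 s i
  | r + 2, s, i => Sp T (r + 2) s i - T (i + r) * T (i + s) * Sp T r (s + 2) i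

/-- Non-homogeneous polynomials `S̃^r_s(i) = Σ_{j=0}^r (-1)^j H_j S^{r-j}_{s-j}(i+j)`. -/
def Stil (T : ℤ → R) (H : ℕ → R) (r s : ℕ) (i : ℤ) : R :=
  ∑ j ∈ Finset.range (r + 1), (-1 : R) ^ j * H j * Sp T (r - j) (s - j) (i + j)

/-- Non-homogeneous polynomials `Q̃^r_s(i) = Σ_{j=0}^r (-1)^j H_j Q^{r-j}_{s-j}(i+j)`. -/
def Qtil (T : ℤ → R) (H : ℕ → R) (r s : ℕ) (i : ℤ) : R :=
  ∑ j ∈ Finset.range (r + 1), (-1 : R) ^ j * H j * Qp T (r - j) (s - j) (i + j)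

/-- `g_j^s(i) = Q̃^j_{s-j-1}(i+1)·S̃^j_{s-j}(i+1)·∏_{q=j}^{s-j-1} T(i+q)`. -/
def gP (T : ℤ → R) (H : ℕ → R) (j s : ℕ) (i : ℤ) : R :=
  Qtil T H j (s - j - 1) (i + 1) * Stil T H j (s - j) (i + 1) *
    ∏ q ∈ Finset.Icc j (s - j - 1), T (i + q)

/-- `f_j^s(i) = Q̃^j_{s-j-1}(i+1)·S̃^{j-1}_{s-j+1}(i)·∏_{q=j-1}^{s-j-1} T(i+q)`. -/
def fP (T : ℤ → R) (H : ℕ → R) (j s : ℕ) (i : ℤ) : R :=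
  Qtil T H j (s - j - 1) (i + 1) * Stil T H (j - 1) (s - j + 1) i *
    ∏ q ∈ Finset.Icc (j - 1) (s - j - 1), T (i + q)

lemma Sp_zero (T : ℤ → R) (s : ℕ) (i : ℤ) : Sp T 0 s i = 1 := by simp [Sp]

lemma Sp_rec (T : ℤ → R) (r s : ℕ) (i : ℤ) :
    Sp T (r+1) (s+1) i = Sp T (r+1) s (i+1) + T (i+r) * Sp T r (s+1) i := by
  match s with
  | 0 =>
    match r with
    | 0 => simp [Sp]
    | c+1 =>
      show Sp T (c+2) 1 i = Sp T (c+2) 0 (i+1) + T (i+(c+1)) * Sp T (c+1) 1 i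
      simp only [Sp, Finset.prod_range_succ]
      push_cast
      ring
  | s+1 => rw [Sp]

lemma Sp1 (T : ℤ → R) : ∀ (s : ℕ) (i : ℤ), Sp T 1 s i = ∑ q ∈ Finset.range s, T (i + q) := by
  intro s
  induction s with
  | zero => intro i; simp [Sp]
  | succ k ih =>
    intro i
    rw [Sp_rec, ih, Finset.sum_range_succ', Sp_zero, mul_one]
    congr 1
    · apply Finset.sum_congr rfl; intro q _; congr 1; push_cast; ring


lemma Sp_dual (T : ℤ → R) : ∀ (a b : ℕ) (x : ℤ),
    Sp T (a+1) (b+1) x = Sp T (a+1) b x + T (x+b) * Sp T a (b+1) (x+1) := by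
  have key : ∀ (n a b : ℕ), a + b = n → ∀ x : ℤ,
      Sp T (a+1) (b+1) x = Sp T (a+1) b x + T (x+b) * Sp T a (b+1) (x+1) := by
    intro n
    induction n using Nat.strong_induction_on with
    | _ n ih =>
      intro a b hab x
      match a, b with
      | 0, b =>
        rw [Sp_zero, Sp1, Sp1, Finset.sum_range_succ, mul_one]
        
      | a+1, 0 =>
        show Sp T (a+2) 1 x = Sp T (a+2) 0 x + T (x+(0:ℕ)) * Sp T (a+1) 1 (x+1)
        rw [show Sp T (a+2) 0 x = 0 by simp [Sp]]
        simp only [Sp]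
        rw [zero_add, Finset.prod_range_succ', mul_comm]
        congr 1
        apply Finset.prod_congr rfl; intro q _; congr 1; push_cast; ring
      | d+1, c+1 =>
        rw [show Sp T (d+2) (c+2) x = Sp T (d+2) (c+1) (x+1) + T (x+(d+1:ℕ)) * Sp T (d+1) (c+2) x
            from Sp_rec T (d+1) (c+1) x]
        rw [ih ((d+1)+c) (by omega) (d+1) c rfl (x+1)]
        rw [ih (d+(c+1)) (by omega) d (c+1) rfl x]
        rw [show Sp T (d+2) (c+1) x = Sp T (d+2) c (x+1) + T (x+(d+1:ℕ)) * Sp T (d+1) (c+1) x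
            from Sp_rec T (d+1) c x]
        rw [show Sp T (d+1) (c+2) (x+1) = Sp T (d+1) (c+1) (x+1+1) + T (x+1+(d:ℕ)) * Sp T d (c+2) (x+1)
            from Sp_rec T d (c+1) (x+1)]
        push_cast
        ring
  intro a b x
  exact key (a+b) a b rfl x

lemma I1hom (T : ℤ → R) (a b : ℕ) (x : ℤ) :
    Qp T (a+1) b x = Sp T (a+1) (b+1) x - T (x + b) * Sp T a (b+2) x := by
  match a with
  | 0 =>
    show Sp T 1 b x = _
    rw [Sp_zero, mul_one, Sp1, Sp1, Finset.sum_range_succ, add_sub_cancel_right]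
  | d+1 =>
    show Sp T (d+2) b x - T (x + d) * T (x + b) * Sp T d (b+2) x = _
    rw [Sp_dual T (d+1) b x]
    rw [show Sp T (d+1) (b+2) x = Sp T (d+1) (b+1) (x+1) + T (x+(d:ℕ)) * Sp T d (b+2) x
        from Sp_rec T d (b+1) x]
    ring

lemma I2hom (T : ℤ → R) (a b : ℕ) (x : ℤ) :
    Qp T (a+1) b (x+1) = Sp T (a+1) (b+1) x - T (x + a) * Sp T a (b+2) x := by
  match a with
  | 0 =>
    show Sp T 1 b (x+1) = _
    rw [Sp_zero, mul_one]
    rw [show Sp T 1 (b+1) x = Sp T 1 b (x+1) + T (x+(0:ℕ)) * Sp T 0 (b+1) x from Sp_rec T 0 b x]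
    rw [Sp_zero]
    push_cast
    ring
  | d+1 =>
    show Sp T (d+2) b (x+1) - T (x+1+d) * T (x+1+b) * Sp T d (b+2) (x+1) = _
    rw [show Sp T (d+2) (b+1) x = Sp T (d+2) b (x+1) + T (x+(d+1:ℕ)) * Sp T (d+1) (b+1) x
        from Sp_rec T (d+1) b x]
    rw [show Sp T (d+1) (b+2) x = Sp T (d+1) (b+1) x + T (x+(b+1:ℕ)) * Sp T d (b+2) (x+1)
        from Sp_dual T d (b+1) x]
    push_cast
    ring

lemma I1til (T : ℤ → R) (H : ℕ → R) (r m : ℕ) (hm : r ≤ m) (x : ℤ) :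
    Qtil T H (r+1) m x = Stil T H (r+1) (m+1) x - T (x + m) * Stil T H r (m+2) x := by
  unfold Qtil Stil
  rw [Finset.sum_range_succ, Finset.sum_range_succ (n := r+1)]
  rw [show r+1-(r+1) = 0 by omega, show m+1-(r+1) = m-r by omega]
  rw [show Qp T 0 (m-(r+1)) (x+(r+1:ℕ)) = 1 from rfl, Sp_zero, Finset.mul_sum]
  have key : ∑ j ∈ Finset.range (r+1), (-1:R)^j * H j * Qp T (r+1-j) (m-j) (x+j) =
      ∑ j ∈ Finset.range (r+1), ((-1:R)^j * H j * Sp T (r+1-j) (m+1-j) (x+j)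
        - T (x + (m:ℕ)) * ((-1:R)^j * H j * Sp T (r-j) (m+2-j) (x+j))) := by
    apply Finset.sum_congr rfl
    intro j hj
    have hjr : j ≤ r := by simpa [Nat.lt_succ_iff] using hj
    rw [show r+1-j = (r-j)+1 by omega, show m+1-j = (m-j)+1 by omega,
        show m+2-j = (m-j)+2 by omega]
    rw [I1hom T (r-j) (m-j) (x+j)]
    have : x + (j:ℕ) + ((m-j:ℕ):ℤ) = x + (m:ℕ) := by
      have : ((m-j:ℕ):ℤ) = (m:ℤ) - j := by omega
      rw [this]; ring
    rw [this]
    ring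
  rw [key, Finset.sum_sub_distrib]
  ring

lemma I2til (T : ℤ → R) (H : ℕ → R) (r m : ℕ) (hm : r ≤ m) (x : ℤ) :
    Qtil T H (r+1) m (x+1) = Stil T H (r+1) (m+1) x - T (x + r) * Stil T H r (m+2) x := by
  unfold Qtil Stil
  rw [Finset.sum_range_succ, Finset.sum_range_succ (n := r+1)]
  rw [show r+1-(r+1) = 0 by omega, show m+1-(r+1) = m-r by omega]
  rw [show Qp T 0 (m-(r+1)) (x+1+(r+1:ℕ)) = 1 from rfl, Sp_zero, Finset.mul_sum]
  have key : ∑ j ∈ Finset.range (r+1), (-1:R)^j * H j * Qp T (r+1-j) (m-j) (x+1+j) =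
      ∑ j ∈ Finset.range (r+1), ((-1:R)^j * H j * Sp T (r+1-j) (m+1-j) (x+j)
        - T (x + (r:ℕ)) * ((-1:R)^j * H j * Sp T (r-j) (m+2-j) (x+j))) := by
    apply Finset.sum_congr rfl
    intro j hj
    have hjr : j ≤ r := by simpa [Nat.lt_succ_iff] using hj
    rw [show r+1-j = (r-j)+1 by omega, show m+1-j = (m-j)+1 by omega,
        show m+2-j = (m-j)+2 by omega]
    rw [show x+1+(j:ℕ) = x+(j:ℕ)+1 by ring]
    rw [I2hom T (r-j) (m-j) (x+j)]
    have : x + (j:ℕ) + ((r-j:ℕ):ℤ) = x + (r:ℕ) := by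
      have : ((r-j:ℕ):ℤ) = (r:ℤ) - j := by omega
      rw [this]; ring
    rw [this]
    ring
  rw [key, Finset.sum_sub_distrib]
  ring

lemma Stil_zero (T : ℤ → R) (H : ℕ → R) (hH0 : H 0 = 1) (s : ℕ) (i : ℤ) :
    Stil T H 0 s i = 1 := by simp [Stil, Sp_zero, hH0]

lemma Qtil_zero (T : ℤ → R) (H : ℕ → R) (hH0 : H 0 = 1) (s : ℕ) (i : ℤ) :
    Qtil T H 0 s i = 1 := by simp [Qtil, Qp, hH0]

lemma prod_Icc_bot (f : ℕ → R) (a b : ℕ) (h : a ≤ b) :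
    ∏ q ∈ Finset.Icc a b, f q = f a * ∏ q ∈ Finset.Icc (a+1) b, f q := by
  rw [show Finset.Icc a b = insert a (Finset.Icc (a+1) b) by
        rw [Finset.Icc_add_one_left_eq_Ioc, Finset.Ioc_insert_left h],
      Finset.prod_insert (by simp)]

lemma stepB (T : ℤ → R) (H : ℕ → R) (r s : ℕ) (hs : 2 * r + 2 ≤ s) (i : ℤ)
    (hA : (∑ j ∈ Finset.range (r + 1), gP T H j s i) + ∑ j ∈ Finset.Icc 1 r, fP T H j s i =
      Stil T H r (s - r) i * Stil T H r (s - r) (i + 1) *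
        ∏ q ∈ Finset.Icc r (s - r - 1), T (i + q)) :
    (∑ j ∈ Finset.range (r + 1), gP T H j s i) + ∑ j ∈ Finset.Icc 1 (r + 1), fP T H j s i =
      Stil T H r (s - r) i * Stil T H (r + 1) (s - r - 1) (i + 1) *
        ∏ q ∈ Finset.Icc r (s - r - 2), T (i + q) := by
  rw [Finset.sum_Icc_succ_top (by omega : 1 ≤ r + 1), ← add_assoc, hA]
  unfold fP
  rw [show r + 1 - 1 = r by omega, show s - (r+1) - 1 = s - r - 2 by omega,
      show s - (r+1) + 1 = s - r by omega]
  have h1 : Qtil T H (r+1) (s-r-2) (i+1) =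
      Stil T H (r+1) (s-r-1) (i+1) - T (i + ((s-r-1 : ℕ) : ℤ)) * Stil T H r (s-r) (i+1) := by
    have h := I1til T H r (s-r-2) (by omega) (i+1)
    rw [show s-r-2+1 = s-r-1 by omega, show s-r-2+2 = s-r by omega,
        show i + 1 + ((s-r-2 : ℕ) : ℤ) = i + ((s-r-1 : ℕ) : ℤ) by omega] at h
    exact h
  rw [h1]
  rw [show s - r - 1 = (s - r - 2) + 1 by omega,
      Finset.prod_Icc_succ_top (by omega : r ≤ (s - r - 2) + 1)]
  ring

lemma stepA (T : ℤ → R) (H : ℕ → R) (r s : ℕ) (hs : 2 * (r + 1) + 2 ≤ s) (i : ℤ)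
    (hB : (∑ j ∈ Finset.range (r + 1), gP T H j s i) + ∑ j ∈ Finset.Icc 1 (r + 1), fP T H j s i =
      Stil T H r (s - r) i * Stil T H (r + 1) (s - r - 1) (i + 1) *
        ∏ q ∈ Finset.Icc r (s - r - 2), T (i + q)) :
    (∑ j ∈ Finset.range (r + 1 + 1), gP T H j s i) + ∑ j ∈ Finset.Icc 1 (r + 1), fP T H j s i =
      Stil T H (r + 1) (s - (r+1)) i * Stil T H (r + 1) (s - (r+1)) (i + 1) *
        ∏ q ∈ Finset.Icc (r + 1) (s - (r+1) - 1), T (i + q) := by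
  rw [Finset.sum_range_succ, add_right_comm, hB]
  unfold gP
  rw [show s - (r+1) - 1 = s - r - 2 by omega, show s - (r+1) = s - r - 1 by omega]
  have h1 : Qtil T H (r+1) (s-r-2) (i+1) =
      Stil T H (r+1) (s-r-1) i - T (i + (r : ℕ)) * Stil T H r (s-r) i := by
    have h := I2til T H r (s-r-2) (by omega) i
    rw [show s-r-2+1 = s-r-1 by omega, show s-r-2+2 = s-r by omega] at h
    exact h
  rw [h1]
  rw [prod_Icc_bot (fun q => T (i + q)) r (s - r - 2) (by omega)]
  ring

/-- Lemma 4: for `r ≥ 0` and `s ≥ 2r + 2`,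
`Σ_{j=0}^{r} g_j^s(i) + Σ_{j=1}^{r} f_j^s(i) = S̃^r_{s-r}(i)·S̃^r_{s-r}(i+1)·∏_{q=r}^{s-r-1} T(i+q)`
and
`Σ_{j=0}^{r} g_j^s(i) + Σ_{j=1}^{r+1} f_j^s(i) = S̃^r_{s-r}(i)·S̃^{r+1}_{s-r-1}(i+1)·∏_{q=r}^{s-r-2} T(i+q)`. -/
theorem gf_sum_identities (T : ℤ → R) (H : ℕ → R) (hH0 : H 0 = 1)
    (r s : ℕ) (hs : 2 * r + 2 ≤ s) (i : ℤ) :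
    ((∑ j ∈ Finset.range (r + 1), gP T H j s i) + ∑ j ∈ Finset.Icc 1 r, fP T H j s i =
      Stil T H r (s - r) i * Stil T H r (s - r) (i + 1) *
        ∏ q ∈ Finset.Icc r (s - r - 1), T (i + q)) ∧
    ((∑ j ∈ Finset.range (r + 1), gP T H j s i) + ∑ j ∈ Finset.Icc 1 (r + 1), fP T H j s i =
      Stil T H r (s - r) i * Stil T H (r + 1) (s - r - 1) (i + 1) *
        ∏ q ∈ Finset.Icc r (s - r - 2), T (i + q)) := by
  induction r with
  | zero =>
    have hA : (∑ j ∈ Finset.range (0 + 1), gP T H j s i) + ∑ j ∈ Finset.Icc 1 0, fP T H j s i =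
        Stil T H 0 (s - 0) i * Stil T H 0 (s - 0) (i + 1) *
          ∏ q ∈ Finset.Icc 0 (s - 0 - 1), T (i + q) := by
      simp [gP, Stil_zero T H hH0, Qtil_zero T H hH0]
    exact ⟨hA, stepB T H 0 s hs i hA⟩
  | succ r ih =>
    have hB := (ih (by omega)).2
    have hA := stepA T H r s hs i hB
    exact ⟨hA, stepB T H (r+1) s hs i hA⟩
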